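/- Let k be an integer with 1 ≤ k ≤ d and let x_0, …, x_{k−1} ∈ ℂ^{ℤ/dℤ}. For each p ∈ (ℤ/dℤ)² let u_p ∈ ℂ^k ⊗ ℂ^{ℤ/dℤ} (≅ ℂ^{kd}) be the stacked column vector u_p = Σ_{r=0}^{k−1} e_r ⊗ (D_p x_r), where e_r is the standard basis of ℂ^k. Then Σ_{p ∈ (ℤ/dℤ)²} |u_p⟩⟨u_p| = d·1_{kd} if and only if ⟨x_s, x_r⟩ = δ_{rs} for all 0 ≤ r, s ≤ k−1, i.e. the frame generated by the block matrix with blocks D_p x_r is tight if and only if the vectors x_r form an orthonormal set in ℂ^{ℤ/dℤ}. -/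

import Mathlib

open Matrix Complex

/-- `τ = -exp(iπ/d)`. -/
noncomputable def tau (d : ℕ) : ℂ := -Complex.exp (Real.pi * Complex.I / d)

/-- The displacement operator `D_p = D_{i,j}`, with `(r,s)` entry
`τ^{ij+2js} δ_{r,s+i}` (exponents of the `d`-th root of unity `τ` taken mod `d`). -/
noncomputable def Disp (d : ℕ) [NeZero d] (p : ZMod d × ZMod d) :
    Matrix (ZMod d) (ZMod d) ℂ :=
  Matrix.of fun r s =>
    tau d ^ ((p.1 * p.2 + 2 * p.2 * s).val) * (if r = s + p.1 then 1 else 0)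

/-- Rank-one projector `|x⟩⟨x|` as a matrix. -/
noncomputable def outer {n : Type*} [Fintype n] (x : n → ℂ) : Matrix n n ℂ :=
  Matrix.of fun i j => x i * star (x j)

/-- The standard Hermitian inner product `⟨x, y⟩`, antilinear in the first slot. -/
noncomputable def cInner {n : Type*} [Fintype n] (x y : n → ℂ) : ℂ :=
  ∑ k, star (x k) * y k

/-!
The `((r, a), (s, b))` entry of `∑ p, |u_p⟩⟨u_p|` is
`∑ i, ∑ j, τ ^ (2 j (a - b)) x_r (a - i) conj (x_s (b - i))`: the phases involving `i` cancel.
Since `τ` is a primitive `d`-th root of unity, the sum over `j` is `d` if `2 (a - b) = 0` and `0`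
otherwise, and `2` is a unit mod the odd number `d`. So the frame operator is
`d • (G ⊗ 1)` with `G` the Gram matrix `G r s = ⟨x_s, x_r⟩`, which is `d • 1` iff `G = 1`.
-/

lemma tau_eq_exp_pow {d m : ℕ} (hdm : d = 2 * m + 1) :
    tau d = Complex.exp (2 * Real.pi * Complex.I / d) ^ (m + 1) := by
  have hd : (d : ℂ) ≠ 0 := by rw [hdm]; exact_mod_cast (2 * m).succ_ne_zero
  rw [tau, ← Complex.exp_nat_mul, neg_eq_neg_one_mul, ← Complex.exp_pi_mul_I, ← Complex.exp_add]
  congr 1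
  field_simp
  rw [hdm]
  push_cast
  ring

lemma isPrimitiveRoot_tau {d : ℕ} (hodd : Odd d) : IsPrimitiveRoot (tau d) d := by
  obtain ⟨m, hdm⟩ := hodd
  rw [tau_eq_exp_pow hdm]
  refine (Complex.isPrimitiveRoot_exp d (by omega)).pow_of_coprime _ ?_
  rw [hdm, show 2 * m + 1 = (m + 1) + m by ring]
  simp

lemma ZMod.two_mul_eq_zero_iff_of_odd {d : ℕ} (hodd : Odd d) {y : ZMod d} :
    2 * y = 0 ↔ y = 0 := by
  have h2 : IsUnit (2 : ZMod d) := by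
    exact_mod_cast (ZMod.isUnit_iff_coprime 2 d).mpr (Nat.coprime_two_left.mpr hodd)
  exact h2.mul_right_eq_zero

noncomputable def tauChar (d : ℕ) [NeZero d] (hodd : Odd d) : AddChar (ZMod d) ℂ :=
  AddChar.zmodChar d (isPrimitiveRoot_tau hodd).pow_eq_one

lemma isPrimitive_tauChar (d : ℕ) [NeZero d] (hodd : Odd d) : (tauChar d hodd).IsPrimitive :=
  AddChar.zmodChar_primitive_of_primitive_root d (isPrimitiveRoot_tau hodd)

lemma disp_mulVec_apply (d : ℕ) [NeZero d] (p : ZMod d × ZMod d) (v : ZMod d → ℂ) (a : ZMod d) :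
    (Disp d p *ᵥ v) a = tau d ^ (p.1 * p.2 + 2 * p.2 * (a - p.1)).val * v (a - p.1) := by
  simp only [Disp, mulVec, dotProduct, of_apply, mul_ite, mul_one, mul_zero, ite_mul, zero_mul,
    ← sub_eq_iff_eq_add, Finset.sum_ite_eq, Finset.mem_univ, if_true]

lemma disp_mulVec_mul_star (d : ℕ) [NeZero d] (hodd : Odd d) (p : ZMod d × ZMod d)
    (v w : ZMod d → ℂ) (a b : ZMod d) :
    (Disp d p *ᵥ v) a * star ((Disp d p *ᵥ w) b)
      = tauChar d hodd (p.2 * (2 * (a - b))) * (v (a - p.1) * star (w (b - p.1))) := by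
  have hψ : ∀ t : ZMod d, tau d ^ t.val = tauChar d hodd t := fun _ => rfl
  rw [disp_mulVec_apply, disp_mulVec_apply, hψ, hψ, star_mul', Complex.star_def,
    ← AddChar.map_neg_eq_conj, mul_mul_mul_comm, ← AddChar.map_add_eq_mul]
  ring_nf

lemma sum_disp_mulVec_mul_star (d : ℕ) [NeZero d] (hodd : Odd d) (v w : ZMod d → ℂ)
    (a b : ZMod d) :
    ∑ p : ZMod d × ZMod d, (Disp d p *ᵥ v) a * star ((Disp d p *ᵥ w) b)
      = if a = b then (d : ℂ) * cInner w v else 0 := by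
  simp only [disp_mulVec_mul_star d hodd, Fintype.sum_prod_type, ← Finset.sum_mul,
    AddChar.sum_mulShift _ (isPrimitive_tauChar d hodd), ZMod.two_mul_eq_zero_iff_of_odd hodd,
    sub_eq_zero, ZMod.card]
  split_ifs with hab
  · subst hab
    rw [← Finset.mul_sum, cInner]
    congr 1
    exact Fintype.sum_equiv (Equiv.subLeft a) _ _ fun i => by simp [Equiv.subLeft, mul_comm]
  · simp

theorem tight_frame_iff_orthonormal_general
    (d : ℕ) [NeZero d] (hodd : Odd d)
    (k : ℕ) (x : Fin k → ZMod d → ℂ) :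
    (∑ p : ZMod d × ZMod d,
        outer (fun rs : Fin k × ZMod d => (Disp d p).mulVec (x rs.1) rs.2)
      = (d : ℂ) • (1 : Matrix (Fin k × ZMod d) (Fin k × ZMod d) ℂ)) ↔
    (∀ r s : Fin k, cInner (x s) (x r) = if r = s then 1 else 0) := by
  have hd : (d : ℂ) ≠ 0 := NeZero.ne _
  have entry : ∀ r s : Fin k, ∀ a b : ZMod d,
      (∑ p : ZMod d × ZMod d,
        outer (fun rs : Fin k × ZMod d => (Disp d p).mulVec (x rs.1) rs.2)) (r, a) (s, b)
        = if a = b then (d : ℂ) * cInner (x s) (x r) else 0 := fun r s a b => by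
    simp only [Matrix.sum_apply, outer, of_apply, sum_disp_mulVec_mul_star d hodd]
  have scalar : ∀ r s : Fin k, ∀ a b : ZMod d,
      ((d : ℂ) • (1 : Matrix (Fin k × ZMod d) (Fin k × ZMod d) ℂ)) (r, a) (s, b)
        = if a = b then (d : ℂ) * (if r = s then 1 else 0) else 0 := fun r s a b => by
    by_cases hab : a = b <;> simp [one_apply, hab]
  rw [← Matrix.ext_iff]
  simp only [Prod.forall, entry, scalar]
  constructor
  · intro h r s
    exact mul_left_cancel₀ hd (by simpa only [↓reduceIte] using h r 0 s 0)
  · intro h r a s b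
    rw [h]

/-- The Weyl–Heisenberg covariant frame with stacked fiducial vector
`u = x_0 ⊕ ⋯ ⊕ x_{k-1}` is tight, i.e. `Σ_p |u_p⟩⟨u_p| = d·1_{kd}` where
`u_p = Σ_r e_r ⊗ (D_p x_r)`, if and only if the vectors `x_r` form an
orthonormal set in `ℂ^{ℤ/dℤ}`. -/
theorem tight_frame_iff_orthonormal
    (d : ℕ) [NeZero d] (hodd : Odd d) (hd : 3 ≤ d)
    (k : ℕ) (hk1 : 1 ≤ k) (hkd : k ≤ d) (x : Fin k → ZMod d → ℂ) :
    (∑ p : ZMod d × ZMod d,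
        outer (fun rs : Fin k × ZMod d => (Disp d p).mulVec (x rs.1) rs.2)
      = (d : ℂ) • (1 : Matrix (Fin k × ZMod d) (Fin k × ZMod d) ℂ)) ↔
    (∀ r s : Fin k, cInner (x s) (x r) = if r = s then 1 else 0) :=
  tight_frame_iff_orthonormal_general d hodd k x
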